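/- arXiv:0803.1749 — 3 statements merged into one kernel-verified Lean document; each statement's English description precedes it below -/
import Mathlib

section
/- Let {B_n} be a μ-Cauchy sequence in Ω. Then there exists a strictly increasing function f : ℕ → ℕ with f(n) > n for all n such that lim_{n→∞} μ*(B_n △ limsup_k B_{f(k)}) = 0. In particular, every μ-Cauchy sequence in Ω converges, in the pseudometric d(A,B) = μ*(A △ B), to a subset of X. -/
open Filter Set Topology
open scoped symmDiff ENNReal

/-- `Ω` is an algebra of sets on `X`: it contains `∅` and is closed under
complements and finite unions. -/
def IsSetAlgebraOn {X : Type*} (Ω : Set (Set X)) : Prop :=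
  ∅ ∈ Ω ∧ (∀ A ∈ Ω, Aᶜ ∈ Ω) ∧ (∀ A ∈ Ω, ∀ B ∈ Ω, A ∪ B ∈ Ω)

/-- `μ` is a countably additive measure on the algebra `Ω`. -/
def IsCountablyAdditiveOn {X : Type*} (Ω : Set (Set X)) (μ : Set X → ℝ≥0∞) : Prop :=
  μ ∅ = 0 ∧ ∀ A : ℕ → Set X, (∀ i, A i ∈ Ω) → Pairwise (Function.onFun Disjoint A) →
    (⋃ i, A i) ∈ Ω → μ (⋃ i, A i) = ∑' i, μ (A i)

/-- The outer measure induced by `μ`: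
`μ*(A) = inf { ∑ μ(Cᵢ) : A ⊆ ⋃ᵢ Cᵢ, Cᵢ ∈ Ω }`. -/
noncomputable def muStar {X : Type*} (Ω : Set (Set X)) (μ : Set X → ℝ≥0∞)
    (A : Set X) : ℝ≥0∞ :=
  ⨅ (C : ℕ → Set X) (_ : ∀ i, C i ∈ Ω) (_ : A ⊆ ⋃ i, C i), ∑' i, μ (C i)

/-- A `μ`-Cauchy sequence in `Ω`: a sequence of members of `Ω` with
`μ(B n ∆ B m) → 0` as `n, m → ∞`. -/
def MuCauchy {X : Type*} (Ω : Set (Set X)) (μ : Set X → ℝ≥0∞) (B : ℕ → Set X) : Prop :=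
  (∀ n, B n ∈ Ω) ∧ Tendsto (fun p : ℕ × ℕ => μ (B p.1 ∆ B p.2)) atTop (𝓝 0)

/-- `S̃`: the collection of subsets of `X` that are limits (in the pseudometric
`d(A,B) = μ*(A ∆ B)`) of `μ`-Cauchy sequences from `Ω`. -/
def Stilde {X : Type*} (Ω : Set (Set X)) (μ : Set X → ℝ≥0∞) : Set (Set X) :=
  {S | ∃ B : ℕ → Set X, MuCauchy Ω μ B ∧
    Tendsto (fun n => muStar Ω μ (B n ∆ S)) atTop (𝓝 0)}

/-!
Extract a subsequence with `μ (B (f j) ∆ B (f (j + 1))) < 2⁻¹ ^ j`. A point of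
`B (f n) ∆ limsup_k B (f k)` changes membership somewhere along the tail
`B (f n), B (f (n + 1)), …`, so it lies in some `B (f j) ∆ B (f (j + 1))` with `j ≥ n`.
Covering `B n ∆ limsup_k B (f k)` by `B n ∆ B (f n)` together with these sets gives
`μ*(B n ∆ limsup_k B (f k)) ≤ μ (B n ∆ B (f n)) + ∑_{j ≥ n} 2⁻¹ ^ j`,
and both terms tend to `0`.
-/

section

variable {X : Type*}

lemma IsSetAlgebraOn.symmDiff_mem {Ω : Set (Set X)} (hΩ : IsSetAlgebraOn Ω) {A B : Set X}
    (hA : A ∈ Ω) (hB : B ∈ Ω) : A ∆ B ∈ Ω := by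
  obtain ⟨-, hcompl, hunion⟩ := hΩ
  have hdiff : ∀ A ∈ Ω, ∀ B ∈ Ω, A \ B ∈ Ω := fun A hA B hB => by
    simpa [sdiff_eq, compl_union] using hcompl _ (hunion _ (hcompl _ hA) _ hB)
  exact hunion _ (hdiff A hA B hB) _ (hdiff B hB A hA)

lemma muStar_le_tsum (Ω : Set (Set X)) (μ : Set X → ℝ≥0∞) {A : Set X} (C : ℕ → Set X)
    (hC : ∀ i, C i ∈ Ω) (hA : A ⊆ ⋃ i, C i) : muStar Ω μ A ≤ ∑' i, μ (C i) :=
  iInf₂_le_of_le C hC (iInf_le _ hA)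

lemma muStar_le_add_tsum (Ω : Set (Set X)) (μ : Set X → ℝ≥0∞) {A C : Set X} (D : ℕ → Set X)
    (hC : C ∈ Ω) (hD : ∀ j, D j ∈ Ω) (hA : A ⊆ C ∪ ⋃ j, D j) :
    muStar Ω μ A ≤ μ C + ∑' j, μ (D j) := by
  let E : ℕ → Set X := fun | 0 => C | j + 1 => D j
  have hcover : A ⊆ ⋃ i, E i := by
    refine hA.trans (union_subset (subset_iUnion E 0) (iUnion_subset fun j => ?_))
    exact subset_iUnion E (j + 1)
  have hE : ∀ i, E i ∈ Ω := by rintro (_ | j) <;> simp [E, *]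
  calc muStar Ω μ A ≤ ∑' i, μ (E i) := muStar_le_tsum Ω μ E hE hcover
    _ = μ C + ∑' j, μ (D j) := tsum_eq_zero_add' ENNReal.summable

lemma symmDiff_add_subset_iUnion (D : ℕ → Set X) (n k : ℕ) :
    D n ∆ D (k + n) ⊆ ⋃ j, D (j + n) ∆ D (j + n + 1) := by
  induction k with
  | zero => simp
  | succ k ih =>
    calc D n ∆ D (k + 1 + n) ⊆ D n ∆ D (k + n) ∪ D (k + n) ∆ D (k + n + 1) := by
          rw [Nat.add_right_comm]; exact symmDiff_triangle _ _ _
      _ ⊆ _ := union_subset ih (subset_iUnion (fun j => D (j + n) ∆ D (j + n + 1)) k)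

lemma symmDiff_limsup_subset_iUnion (D : ℕ → Set X) (n : ℕ) :
    D n ∆ (⋂ m, ⋃ k, ⋃ (_ : m ≤ k), D k) ⊆ ⋃ j, D (j + n) ∆ D (j + n + 1) := by
  intro x hx
  rcases mem_symmDiff.1 hx with ⟨hxn, hxS⟩ | ⟨hxS, hxn⟩
  · obtain ⟨m, hm⟩ : ∃ m, ∀ k, m ≤ k → x ∉ D k := by simpa using hxS
    exact symmDiff_add_subset_iUnion D n m (Or.inl ⟨hxn, hm _ (Nat.le_add_right m n)⟩)
  · obtain ⟨k, hnk, hxk⟩ : ∃ k, n ≤ k ∧ x ∈ D k := by simpa using mem_iInter.1 hxS n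
    obtain ⟨i, rfl⟩ := Nat.exists_eq_add_of_le' hnk
    exact symmDiff_add_subset_iUnion D n i (Or.inr ⟨hxk, hxn⟩)

lemma exists_strictMono_lt_self_consecutive_lt {d : ℕ × ℕ → ℝ≥0∞}
    (hd : Tendsto d atTop (𝓝 0)) {ε : ℕ → ℝ≥0∞} (hε : ∀ j, 0 < ε j) :
    ∃ f : ℕ → ℕ, StrictMono f ∧ (∀ n, n < f n) ∧ ∀ j, d (f j, f (j + 1)) < ε j := by
  have hN : ∀ j, ∃ N, ∀ p q, N ≤ p → N ≤ q → d (p, q) < ε j := fun j =>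
    eventually_atTop_prod_self.1 (hd.eventually (gt_mem_nhds (hε j)))
  choose N hN using hN
  obtain ⟨f, hf, hfN⟩ := extraction_forall_of_eventually (P := fun j k => N j ≤ k ∧ j < k)
    fun j => (eventually_ge_atTop (N j)).and (eventually_gt_atTop j)
  exact ⟨f, hf, fun n => (hfN n).2,
    fun j => hN j _ _ (hfN j).1 ((hfN j).1.trans (hf (Nat.lt_succ_self j)).le)⟩

lemma ENNReal.tsum_inv_two_pow_ne_top : ∑' j : ℕ, (2 : ℝ≥0∞)⁻¹ ^ j ≠ ∞ := by
  simp [ENNReal.tsum_geometric, ENNReal.one_sub_inv_two]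

end

theorem stmt0_general {X : Type*} (Ω : Set (Set X)) (μ : Set X → ℝ≥0∞)
    (hΩ : IsSetAlgebraOn Ω)
    (B : ℕ → Set X) (hB : MuCauchy Ω μ B) :
    (∃ f : ℕ → ℕ, StrictMono f ∧ (∀ n, n < f n) ∧
      Tendsto (fun n => muStar Ω μ (B n ∆ ⋂ m, ⋃ k, ⋃ (_ : m ≤ k), B (f k)))
        atTop (𝓝 0)) ∧
    ∃ S : Set X, Tendsto (fun n => muStar Ω μ (B n ∆ S)) atTop (𝓝 0) := by
  obtain ⟨hBΩ, hCauchy⟩ := hB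
  obtain ⟨f, hf, hlt, hfast⟩ := exists_strictMono_lt_self_consecutive_lt hCauchy
    (ε := fun j => (2 : ℝ≥0∞)⁻¹ ^ j) (fun j => ENNReal.pow_pos (by simp) j)
  set S := ⋂ m, ⋃ k, ⋃ (_ : m ≤ k), B (f k)
  have hbound (n : ℕ) :
      muStar Ω μ (B n ∆ S) ≤ μ (B n ∆ B (f n)) + ∑' j, (2 : ℝ≥0∞)⁻¹ ^ (j + n) := by
    have hcover : B n ∆ S ⊆ B n ∆ B (f n) ∪ ⋃ j, B (f (j + n)) ∆ B (f (j + n + 1)) :=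
      (symmDiff_triangle _ (B (f n)) _).trans
        (union_subset_union_right _ (symmDiff_limsup_subset_iUnion (B ∘ f) n))
    calc muStar Ω μ (B n ∆ S)
        ≤ μ (B n ∆ B (f n)) + ∑' j, μ (B (f (j + n)) ∆ B (f (j + n + 1))) :=
          muStar_le_add_tsum Ω μ _ (hΩ.symmDiff_mem (hBΩ _) (hBΩ _))
            (fun _ => hΩ.symmDiff_mem (hBΩ _) (hBΩ _)) hcover
      _ ≤ _ := by gcongr with j; exact (hfast (j + n)).le
  have hpair : Tendsto (fun n => (n, f n)) atTop atTop := by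
    rw [← prod_atTop_atTop_eq]; exact tendsto_id.prodMk hf.tendsto_atTop
  have hdiag : Tendsto (fun n => μ (B n ∆ B (f n))) atTop (𝓝 0) := hCauchy.comp hpair
  have htail := ENNReal.tendsto_sum_nat_add _ ENNReal.tsum_inv_two_pow_ne_top
  have hS : Tendsto (fun n => muStar Ω μ (B n ∆ S)) atTop (𝓝 0) :=
    tendsto_of_tendsto_of_tendsto_of_le_of_le tendsto_const_nhds
      (by simpa using hdiag.add htail) (fun _ => zero_le) hbound
  exact ⟨⟨f, hf, hlt, hS⟩, S, hS⟩

/-- every μ-Cauchy sequence in Ω has a subsequence whose limsup is a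
limit of the sequence in the pseudometric `d(A,B) = μ*(A ∆ B)`; in particular every
μ-Cauchy sequence converges to some subset of `X`. -/
theorem stmt0 {X : Type*} (Ω : Set (Set X)) (μ : Set X → ℝ≥0∞)
    (hΩ : IsSetAlgebraOn Ω) (hμ : IsCountablyAdditiveOn Ω μ) (hfin : μ Set.univ ≠ ⊤)
    (B : ℕ → Set X) (hB : MuCauchy Ω μ B) :
    (∃ f : ℕ → ℕ, StrictMono f ∧ (∀ n, n < f n) ∧
      Tendsto (fun n => muStar Ω μ (B n ∆ ⋂ m, ⋃ k, ⋃ (_ : m ≤ k), B (f k)))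
        atTop (𝓝 0)) ∧
    ∃ S : Set X, Tendsto (fun n => muStar Ω μ (B n ∆ S)) atTop (𝓝 0) :=
  stmt0_general Ω μ hΩ B hB
end

section
/- (Well-definedness of F.) Let {A_n} and {B_n} be μ-Cauchy sequences in Ω with lim_{n→∞} μ(A_n △ B_n) = 0. Suppose f, g : ℕ → ℕ are such that lim_{n→∞} μ*(A_n △ limsup_k A_{f(k)}) = 0 and lim_{n→∞} μ*(B_n △ limsup_k B_{g(k)}) = 0. Then μ*( (limsup_k A_{f(k)}) △ (limsup_k B_{g(k)}) ) = 0, i.e., limsup_k A_{f(k)} = limsup_k B_{g(k)} almost everywhere. -/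
open Filter Set Topology
open scoped symmDiff ENNReal

open MeasureTheory

/-! For the two limsups `S`, `T`, subadditivity of the outer measure `μ*` and
`S ∆ T ⊆ (S ∆ Aₙ) ∪ (Aₙ ∆ Bₙ) ∪ (Bₙ ∆ T)` bound `μ*(S ∆ T)` by three terms tending to zero.
The middle term is controlled by `μ(Aₙ ∆ Bₙ)` because `μ*` is the outer measure induced by `μ`,
hence `μ* ≤ μ` on `Ω`. -/

theorem IsSetAlgebraOn.isSetAlgebra {X : Type*} {Ω : Set (Set X)} (hΩ : IsSetAlgebraOn Ω) :
    IsSetAlgebra Ω where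
  empty_mem := hΩ.1
  compl_mem := hΩ.2.1
  union_mem _ _ hs ht := hΩ.2.2 _ hs _ ht

theorem MeasureTheory.IsSetAlgebra.symmDiff_mem {X : Type*} {Ω : Set (Set X)}
    (hΩ : IsSetAlgebra Ω) {s t : Set X} (hs : s ∈ Ω) (ht : t ∈ Ω) : s ∆ t ∈ Ω :=
  hΩ.union_mem (hΩ.sdiff_mem hs ht) (hΩ.sdiff_mem ht hs)

theorem muStar_eq_inducedOuterMeasure {X : Type*} {Ω : Set (Set X)} {μ : Set X → ℝ≥0∞}
    (hΩ : ∅ ∈ Ω) (hμ : μ ∅ = 0) :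
    muStar Ω μ = inducedOuterMeasure (fun s (_ : s ∈ Ω) => μ s) hΩ hμ := by
  ext S
  rw [inducedOuterMeasure, OuterMeasure.ofFunction_apply, muStar]
  refine le_antisymm (le_iInf₂ fun C hS => ?_) (le_iInf₂ fun C hC => le_iInf fun hS => ?_)
  · by_cases hC : ∀ i, C i ∈ Ω
    · exact iInf₂_le_of_le C hC <| iInf_le_of_le hS <| by simp only [extend_eq _ (hC _), le_rfl]
    · obtain ⟨i, hi⟩ := not_forall.1 hC
      exact le_top.trans_eq (ENNReal.tsum_eq_top_of_eq_top ⟨i, extend_eq_top _ hi⟩).symm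
  · exact iInf₂_le_of_le C hS <| by simp only [extend_eq _ (hC _), le_rfl]

theorem muStar_le_of_mem {X : Type*} {Ω : Set (Set X)} {μ : Set X → ℝ≥0∞}
    (hΩ : ∅ ∈ Ω) (hμ : μ ∅ = 0) {C : Set X} (hC : C ∈ Ω) : muStar Ω μ C ≤ μ C := by
  rw [muStar_eq_inducedOuterMeasure hΩ hμ, ← extend_eq (fun s (_ : s ∈ Ω) => μ s) hC]
  exact OuterMeasure.ofFunction_le _

theorem MeasureTheory.measure_symmDiff_eq_zero_of_tendsto {α F : Type*}
    [FunLike F (Set α) ℝ≥0∞] [OuterMeasureClass F α] (ν : F) {a b : ℕ → Set α} {S T : Set α}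
    (haS : Tendsto (fun n => ν (a n ∆ S)) atTop (𝓝 0))
    (hab : Tendsto (fun n => ν (a n ∆ b n)) atTop (𝓝 0))
    (hbT : Tendsto (fun n => ν (b n ∆ T)) atTop (𝓝 0)) : ν (S ∆ T) = 0 := by
  have hbound : ∀ n, ν (S ∆ T) ≤ ν (a n ∆ S) + ν (a n ∆ b n) + ν (b n ∆ T) := fun n =>
    calc ν (S ∆ T) ≤ ν (S ∆ a n) + ν (a n ∆ T) :=
          (measure_mono (symmDiff_triangle S (a n) T)).trans (measure_union_le _ _)
      _ ≤ ν (S ∆ a n) + (ν (a n ∆ b n) + ν (b n ∆ T)) := by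
          gcongr
          exact (measure_mono (symmDiff_triangle _ _ _)).trans (measure_union_le _ _)
      _ = ν (a n ∆ S) + ν (a n ∆ b n) + ν (b n ∆ T) := by rw [symmDiff_comm S, add_assoc]
  have hlim := (haS.add hab).add hbT
  simp only [add_zero] at hlim
  exact nonpos_iff_eq_zero.1 (ge_of_tendsto' hlim hbound)

theorem stmt2_general {X : Type*} (Ω : Set (Set X)) (μ : Set X → ℝ≥0∞)
    (hΩ : IsSetAlgebraOn Ω) (hμ : IsCountablyAdditiveOn Ω μ)
    (A B : ℕ → Set X) (hA : MuCauchy Ω μ A) (hB : MuCauchy Ω μ B)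
    (hAB : Tendsto (fun n => μ (A n ∆ B n)) atTop (𝓝 0))
    (f g : ℕ → ℕ)
    (hf : Tendsto (fun n => muStar Ω μ (A n ∆ ⋂ m, ⋃ k, ⋃ (_ : m ≤ k), A (f k)))
      atTop (𝓝 0))
    (hg : Tendsto (fun n => muStar Ω μ (B n ∆ ⋂ m, ⋃ k, ⋃ (_ : m ≤ k), B (g k)))
      atTop (𝓝 0)) :
    muStar Ω μ ((⋂ m, ⋃ k, ⋃ (_ : m ≤ k), A (f k)) ∆
      (⋂ m, ⋃ k, ⋃ (_ : m ≤ k), B (g k))) = 0 := by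
  have hAB_star : Tendsto (fun n => muStar Ω μ (A n ∆ B n)) atTop (𝓝 0) :=
    tendsto_of_tendsto_of_tendsto_of_le_of_le tendsto_const_nhds hAB (fun _ => zero_le)
      fun n => muStar_le_of_mem hΩ.1 hμ.1 (hΩ.isSetAlgebra.symmDiff_mem (hA.1 n) (hB.1 n))
  rw [muStar_eq_inducedOuterMeasure hΩ.1 hμ.1] at hf hg hAB_star ⊢
  exact measure_symmDiff_eq_zero_of_tendsto _ hf hAB_star hg

/-- well-definedness of F. -/
theorem stmt2 {X : Type*} (Ω : Set (Set X)) (μ : Set X → ℝ≥0∞)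
    (hΩ : IsSetAlgebraOn Ω) (hμ : IsCountablyAdditiveOn Ω μ) (hfin : μ Set.univ ≠ ⊤)
    (A B : ℕ → Set X) (hA : MuCauchy Ω μ A) (hB : MuCauchy Ω μ B)
    (hAB : Tendsto (fun n => μ (A n ∆ B n)) atTop (𝓝 0))
    (f g : ℕ → ℕ)
    (hf : Tendsto (fun n => muStar Ω μ (A n ∆ ⋂ m, ⋃ k, ⋃ (_ : m ≤ k), A (f k)))
      atTop (𝓝 0))
    (hg : Tendsto (fun n => muStar Ω μ (B n ∆ ⋂ m, ⋃ k, ⋃ (_ : m ≤ k), B (g k)))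
      atTop (𝓝 0)) :
    muStar Ω μ ((⋂ m, ⋃ k, ⋃ (_ : m ≤ k), A (f k)) ∆
      (⋂ m, ⋃ k, ⋃ (_ : m ≤ k), B (g k))) = 0 :=
  stmt2_general Ω μ hΩ hμ A B hA hB hAB f g hf hg
end

section
/- (Closure of S̃ under countable unions.) For each i ≥ 1 let {B^i_n}_n be a μ-Cauchy sequence in Ω and let S_i ⊆ X satisfy lim_{n→∞} μ*(B^i_n △ S_i) = 0. Then there exists a μ-Cauchy sequence {Y_L} in Ω (each Y_L a finite union of sets B^i_{K_L} from the given sequences) such that lim_{L→∞} μ*(Y_L △ ⋃_{i=1}^∞ S_i) = 0. In particular, ⋃_{i=1}^∞ S_i ∈ S̃. -/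
open Filter Set Topology
open scoped symmDiff ENNReal

/-!
By Carathéodory's extension theorem, `μ*` is the outer measure of a finite measure `ν` for which
every set of `Ω` is measurable, so the question is one about `ν`. Each `Sᵢ` is a limit of
measurable sets, hence `ν`-null-measurable, and continuity from below gives
`ν (⋃ᵢ Sᵢ \ ⋃_{i ≤ L} Sᵢ) → 0`. Choosing `K_L` with `∑_{i ≤ L} ν (B i K_L ∆ Sᵢ) ≤ 1 / L`, the
sets `Y_L = ⋃_{i ≤ L} B i K_L` converge to `⋃ᵢ Sᵢ`, and a convergent sequence is Cauchy.
-/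

open MeasureTheory

lemma MeasureTheory.IsSetRing.symmDiff_mem {α : Type*} {C : Set (Set α)} (hC : IsSetRing C)
    {s t : Set α} (hs : s ∈ C) (ht : t ∈ C) : s ∆ t ∈ C :=
  hC.union_mem (hC.sdiff_mem hs ht) (hC.sdiff_mem ht hs)

section SetAlgebra

variable {X : Type*} {Ω : Set (Set X)} {μ : Set X → ℝ≥0∞}

lemma IsSetAlgebraOn.isSetAlgebra_s9 (hΩ : IsSetAlgebraOn Ω) : IsSetAlgebra Ω :=
  ⟨hΩ.1, fun s hs => hΩ.2.1 s hs, fun s t hs ht => hΩ.2.2 s hs t ht⟩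

lemma IsCountablyAdditiveOn.apply_union (hμ : IsCountablyAdditiveOn Ω μ) (hΩ : IsSetRing Ω)
    {s t : Set X} (hs : s ∈ Ω) (ht : t ∈ Ω) (hst : Disjoint s t) :
    μ (s ∪ t) = μ s + μ t := by
  let f : ℕ → Set X := fun | 0 => s | 1 => t | _ => ∅
  have hf : ∀ n, f n ∈ Ω := fun | 0 => hs | 1 => ht | _ + 2 => hΩ.empty_mem
  have hU : ⋃ n, f n = s ∪ t := by
    ext x; simp only [mem_iUnion, mem_union]
    constructor
    · rintro ⟨_ | _ | _, hx⟩ <;> simp_all [f]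
    · rintro (hx | hx); exacts [⟨0, hx⟩, ⟨1, hx⟩]
  have hd : Pairwise (Function.onFun Disjoint f) := by
    refine (pairwise_disjoint_on f).2 fun m n hmn => ?_
    match m, n, hmn with
    | 0, 1, _ => exact hst
    | _ + 1, 1, h => omega
    | _, _ + 2, _ => exact disjoint_bot_right
  rw [← hU, hμ.2 f hf hd (hU ▸ hΩ.union_mem hs ht), tsum_eq_zero_add' ENNReal.summable,
    tsum_eq_zero_add' ENNReal.summable]
  simp [f, hμ.1]

noncomputable def IsCountablyAdditiveOn.addContent (hμ : IsCountablyAdditiveOn Ω μ)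
    (hΩ : IsSetRing Ω) : AddContent ℝ≥0∞ Ω :=
  hΩ.addContent_of_union μ hμ.1 (hμ.apply_union hΩ)

lemma IsCountablyAdditiveOn.isSigmaSubadditive_addContent (hμ : IsCountablyAdditiveOn Ω μ)
    (hΩ : IsSetRing Ω) : (hμ.addContent hΩ).IsSigmaSubadditive :=
  isSigmaSubadditive_of_addContent_iUnion_eq_tsum hΩ fun f hf hU hd => hμ.2 f hf hd hU

theorem exists_measure_eq_muStar (hΩ : IsSetAlgebraOn Ω) (hμ : IsCountablyAdditiveOn Ω μ) :
    ∃ (_ : MeasurableSpace X) (ν : Measure X),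
      (∀ s, ν s = muStar Ω μ s) ∧ ∀ s ∈ Ω, MeasurableSet s ∧ ν s = μ s := by
  have hR := hΩ.isSetAlgebra_s9.isSetRing
  set m := hμ.addContent hR
  refine ⟨_, m.measureCaratheodory hR.isSetSemiring (hμ.isSigmaSubadditive_addContent hR),
    fun s => ?_, fun s hs => ⟨m.isCaratheodory_inducedOuterMeasure_of_mem hR.isSetSemiring hs,
      m.measureCaratheodory_eq hR.isSetSemiring _ hs⟩⟩
  rw [AddContent.measureCaratheodory_eq_inducedOuterMeasure, inducedOuterMeasure,
    OuterMeasure.ofFunction_eq_iInf_mem (P := (· ∈ Ω)) (m_top := fun _ => extend_eq_top _), muStar]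
  refine iInf_congr fun t => iInf_congr fun ht => ?_
  simp only [extend_eq _ (ht _)]
  rfl

end SetAlgebra

section Measure

variable {α : Type*} [MeasurableSpace α] {ν : Measure α}

lemma nullMeasurableSet_of_tendsto_measure_symmDiff {B : ℕ → Set α} {S : Set α}
    (hB : ∀ n, MeasurableSet (B n)) (h : Tendsto (fun n => ν (B n ∆ S)) atTop (𝓝 0)) :
    NullMeasurableSet S ν := by
  set T := ⋂ n, (B n ∪ toMeasurable ν (B n ∆ S))
  have hST : S ⊆ T := fun x hx => mem_iInter.2 fun n => by
    by_cases hxB : x ∈ B n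
    exacts [Or.inl hxB, Or.inr (subset_toMeasurable _ _ (Or.inr ⟨hx, hxB⟩))]
  have hTS : ∀ n, T \ S ⊆ toMeasurable ν (B n ∆ S) := fun n x ⟨hxT, hxS⟩ => by
    rcases mem_iInter.1 hxT n with hxB | hx
    exacts [subset_toMeasurable _ _ (Or.inl ⟨hxB, hxS⟩), hx]
  have hT : MeasurableSet T :=
    .iInter fun n => (hB n).union (measurableSet_toMeasurable _ _)
  have hnull : ν (T \ S) = 0 := nonpos_iff_eq_zero.1 <| ge_of_tendsto' h fun n =>
    (measure_mono (hTS n)).trans_eq (measure_toMeasurable _)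
  exact hT.nullMeasurableSet.congr (ae_eq_set.2 ⟨hnull, by simp [Set.sdiff_eq_empty.2 hST]⟩)

lemma tendsto_measure_accumulate_symmDiff_iUnion [IsFiniteMeasure ν] {S : ℕ → Set α}
    (hS : ∀ i, NullMeasurableSet (S i) ν) :
    Tendsto (fun N => ν (accumulate S N ∆ ⋃ i, S i)) atTop (𝓝 0) := by
  have hdiff : ∀ N, ν (accumulate S N ∆ ⋃ i, S i) = ν (⋃ i, S i) - ν (accumulate S N) :=
    fun N => by
      rw [symmDiff_of_le (accumulate_subset_iUnion N)]
      exact measure_sdiff (accumulate_subset_iUnion N)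
        (.iUnion fun i => .iUnion fun _ => hS i) (measure_ne_top _ _)
  simp only [hdiff]
  simpa using ENNReal.Tendsto.sub (tendsto_const_nhds (x := ν (⋃ i, S i)))
    (tendsto_measure_iUnion_accumulate (μ := ν) (f := S)) (.inl (measure_ne_top ν _))

lemma measure_accumulate_symmDiff_le (A B : ℕ → Set α) (N : ℕ) :
    ν (accumulate A N ∆ accumulate B N) ≤ ∑ i ∈ Finset.Iic N, ν (A i ∆ B i) := by
  calc ν (accumulate A N ∆ accumulate B N) ≤ ν (⋃ i ∈ Finset.Iic N, A i ∆ B i) := by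
        refine measure_mono (iUnion_symmDiff_iUnion_subset.trans (iUnion_mono fun i => ?_))
        simpa using iUnion_symmDiff_iUnion_subset
    _ ≤ ∑ i ∈ Finset.Iic N, ν (A i ∆ B i) := measure_biUnion_finset_le _ _

lemma tendsto_measure_symmDiff_of_tendsto {ι : Type*} {l : Filter ι} {Y : ι → Set α}
    {T : Set α} (h : Tendsto (fun i => ν (Y i ∆ T)) l (𝓝 0)) :
    Tendsto (fun p : ι × ι => ν (Y p.1 ∆ Y p.2)) (l ×ˢ l) (𝓝 0) := by
  have hsum : Tendsto (fun p : ι × ι => ν (Y p.1 ∆ T) + ν (T ∆ Y p.2)) (l ×ˢ l) (𝓝 0) := by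
    simpa [symmDiff_comm T] using (h.comp tendsto_fst).add (h.comp tendsto_snd)
  exact tendsto_of_tendsto_of_tendsto_of_le_of_le tendsto_const_nhds hsum (fun _ => zero_le)
    fun p => measure_symmDiff_le _ T _

theorem exists_tendsto_measure_accumulate_symmDiff_iUnion [IsFiniteMeasure ν]
    {B : ℕ → ℕ → Set α} {S : ℕ → Set α} (hB : ∀ i n, MeasurableSet (B i n))
    (hS : ∀ i, Tendsto (fun n => ν (B i n ∆ S i)) atTop (𝓝 0)) :
    ∃ K : ℕ → ℕ, Tendsto (fun L => ν (accumulate (fun i => B i (K L)) L ∆ ⋃ i, S i))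
      atTop (𝓝 0) := by
  have hK : ∀ L : ℕ, ∃ K, ∑ i ∈ Finset.Iic L, ν (B i K ∆ S i) ≤ (L : ℝ≥0∞)⁻¹ := fun L =>
    ((tendsto_finsetSum _ fun i _ => hS i).eventually (ge_mem_nhds (by simp))).exists
  choose K hK using hK
  have htail := tendsto_measure_accumulate_symmDiff_iUnion
    fun i => nullMeasurableSet_of_tendsto_measure_symmDiff (hB i) (hS i)
  refine ⟨K, tendsto_of_tendsto_of_tendsto_of_le_of_le tendsto_const_nhds
    (by simpa using ENNReal.tendsto_inv_nat_nhds_zero.add htail) (fun _ => zero_le) fun L => ?_⟩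
  calc ν (accumulate (fun i => B i (K L)) L ∆ ⋃ i, S i)
      ≤ ν (accumulate (fun i => B i (K L)) L ∆ accumulate S L)
        + ν (accumulate S L ∆ ⋃ i, S i) := measure_symmDiff_le _ _ _
    _ ≤ (L : ℝ≥0∞)⁻¹ + ν (accumulate S L ∆ ⋃ i, S i) :=
        add_le_add_left ((measure_accumulate_symmDiff_le _ _ L).trans (hK L)) _

end Measure

/-- closure of S̃ under countable unions. -/
theorem stmt9 {X : Type*} (Ω : Set (Set X)) (μ : Set X → ℝ≥0∞)
    (hΩ : IsSetAlgebraOn Ω) (hμ : IsCountablyAdditiveOn Ω μ) (hfin : μ Set.univ ≠ ⊤)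
    (B : ℕ → ℕ → Set X) (S : ℕ → Set X)
    (hB : ∀ i, MuCauchy Ω μ (B i))
    (hS : ∀ i, Tendsto (fun n => muStar Ω μ (B i n ∆ S i)) atTop (𝓝 0)) :
    (∃ Y : ℕ → Set X, MuCauchy Ω μ Y ∧
      (∃ N K : ℕ → ℕ, ∀ L, Y L = ⋃ i, ⋃ (_ : i ≤ N L), B i (K L)) ∧
      Tendsto (fun L => muStar Ω μ (Y L ∆ ⋃ i, S i)) atTop (𝓝 0)) ∧
    (⋃ i, S i) ∈ Stilde Ω μ := by
  have hR := hΩ.isSetAlgebra_s9.isSetRing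
  obtain ⟨_, ν, hν, hΩν⟩ := exists_measure_eq_muStar hΩ hμ
  have : IsFiniteMeasure ν := ⟨by simpa [(hΩν _ hΩ.isSetAlgebra_s9.univ_mem).2] using hfin.lt_top⟩
  simp only [← hν] at hS
  obtain ⟨K, hK⟩ := exists_tendsto_measure_accumulate_symmDiff_iUnion
    (fun i n => (hΩν _ ((hB i).1 n)).1) hS
  set Y := fun L => accumulate (fun i => B i (K L)) L
  have hYΩ : ∀ L, Y L ∈ Ω := fun L => hR.accumulate_mem (fun i => (hB i).1 _) L
  have hY : MuCauchy Ω μ Y := by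
    refine ⟨hYΩ, ?_⟩
    rw [← prod_atTop_atTop_eq]
    exact (tendsto_measure_symmDiff_of_tendsto hK).congr fun p =>
      (hΩν _ (hR.symmDiff_mem (hYΩ _) (hYΩ _))).2
  simp only [hν] at hK
  exact ⟨⟨Y, hY, ⟨id, K, fun L => rfl⟩, hK⟩, Y, hY, hK⟩
end
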